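/- arXiv:math/0505308 — 4 statements merged into one kernel-verified Lean document; each statement's English description precedes it below -/
import Mathlib

section
/- Let H be a Hilbert space, (x_{ij})_{1≤i,j≤n} a finite matrix of bounded operators on H, and (e_i)_{1≤i≤n}, (f_j)_{1≤j≤n} two finite families of pairwise orthogonal projections in B(H). Then ‖Σ_{i,j} e_i x_{ij} f_j‖_{B(H)} ≤ ‖M‖_{op}, where M is the n×n scalar matrix with entries M_{ij} = ‖e_i x_{ij} f_j‖_{B(H)} and ‖M‖_{op} is its operator norm as a map on ℓ²(Fin n). -/
open scoped Matrix

lemma aux_sum_sq_proj_le {H : Type*} [NormedAddCommGroup H] [InnerProductSpace ℂ H]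
    [CompleteSpace H] {n : ℕ} (p : Fin n → H →L[ℂ] H)
    (hidem : ∀ j, IsIdempotentElem (p j)) (hsa : ∀ j, IsSelfAdjoint (p j))
    (horth : ∀ i j, i ≠ j → p i * p j = 0) (v : H) :
    ∑ j, ‖p j v‖ ^ 2 ≤ ‖v‖ ^ 2 := by
  classical
  set P : H →L[ℂ] H := ∑ j, p j with hP
  have hPv : P v = ∑ j, p j v := by simp [hP]
  have hcross : ∀ i j : Fin n, i ≠ j → (inner ℂ (p i v) (p j v) : ℂ) = 0 := by
    intro i j hij
    have hsa' := ContinuousLinearMap.isSelfAdjoint_iff'.mp (hsa i)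
    have h0 : p i (p j v) = 0 := by
      have := congrArg (fun T : H →L[ℂ] H => T v) (horth i j hij)
      simpa [ContinuousLinearMap.mul_apply] using this
    calc (inner ℂ (p i v) (p j v) : ℂ)
        = inner ℂ ((ContinuousLinearMap.adjoint (p i)) v) (p j v) := by rw [hsa']
      _ = inner ℂ v (p i (p j v)) := ContinuousLinearMap.adjoint_inner_left _ _ _
      _ = 0 := by simp [h0]
  have hinner : (inner ℂ (P v) (P v) : ℂ) = ∑ j, inner ℂ (p j v) (p j v) := by
    rw [hPv, sum_inner]
    refine Finset.sum_congr rfl fun i _ => ?_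
    rw [inner_sum, Finset.sum_eq_single i]
    · intro j _ hji; exact hcross i j (Ne.symm hji)
    · intro h; exact absurd (Finset.mem_univ i) h
  have hsum : ‖P v‖ ^ 2 = ∑ j, ‖p j v‖ ^ 2 := by
    have h2 : RCLike.re (inner ℂ (P v) (P v) : ℂ)
        = ∑ j, RCLike.re (inner ℂ (p j v) (p j v) : ℂ) := by
      rw [hinner]; exact map_sum (RCLike.re (K := ℂ)) _ _
    simpa only [inner_self_eq_norm_sq] using h2
  have hPsa : IsSelfAdjoint P := by
    show star P = P
    rw [hP, star_sum]
    exact Finset.sum_congr rfl fun j _ => hsa j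
  have hPidem : P * P = P := by
    rw [hP, Finset.sum_mul_sum]
    refine Finset.sum_congr rfl fun i _ => ?_
    rw [Finset.sum_eq_single i]
    · exact hidem i
    · intro j _ hji; exact horth i j (Ne.symm hji)
    · intro h; exact absurd (Finset.mem_univ i) h
  have hPle : ‖P v‖ ≤ ‖v‖ := by
    have hsa' := ContinuousLinearMap.isSelfAdjoint_iff'.mp hPsa
    have hPP : P (P v) = P v := by
      have := congrArg (fun T : H →L[ℂ] H => T v) hPidem
      simpa [ContinuousLinearMap.mul_apply] using this
    have key : ‖P v‖ ^ 2 ≤ ‖v‖ * ‖P v‖ := by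
      calc ‖P v‖ ^ 2 = RCLike.re (inner ℂ (P v) (P v) : ℂ) :=
            (inner_self_eq_norm_sq _).symm
        _ = RCLike.re (inner ℂ v (P v) : ℂ) := by
            congr 1
            calc (inner ℂ (P v) (P v) : ℂ)
                = inner ℂ ((ContinuousLinearMap.adjoint P) v) (P v) := by rw [hsa']
              _ = inner ℂ v (P (P v)) := ContinuousLinearMap.adjoint_inner_left _ _ _
              _ = inner ℂ v (P v) := by rw [hPP]
        _ ≤ ‖(inner ℂ v (P v) : ℂ)‖ := RCLike.re_le_norm _
        _ ≤ ‖v‖ * ‖P v‖ := norm_inner_le_norm _ _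
    nlinarith [norm_nonneg v, norm_nonneg (P v)]
  calc ∑ j, ‖p j v‖ ^ 2 = ‖P v‖ ^ 2 := hsum.symm
    _ ≤ ‖v‖ ^ 2 := by nlinarith [norm_nonneg (P v), norm_nonneg v]

theorem opnorm_sum_proj_matrix_bound
    {H : Type*} [NormedAddCommGroup H] [InnerProductSpace ℂ H] [CompleteSpace H]
    (n : ℕ) (x : Fin n → Fin n → H →L[ℂ] H)
    (e f : Fin n → H →L[ℂ] H)
    (he_idem : ∀ i, IsIdempotentElem (e i)) (he_sa : ∀ i, IsSelfAdjoint (e i))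
    (hf_idem : ∀ j, IsIdempotentElem (f j)) (hf_sa : ∀ j, IsSelfAdjoint (f j))
    (he_orth : ∀ i j, i ≠ j → e i * e j = 0)
    (hf_orth : ∀ i j, i ≠ j → f i * f j = 0) :
    ‖∑ i, ∑ j, e i ∘L x i j ∘L f j‖ ≤
      ‖Matrix.toEuclideanCLM (𝕜 := ℝ) (n := Fin n)
        (Matrix.of fun i j => (‖e i ∘L x i j ∘L f j‖ : ℝ))‖ := by
  classical
  set y : Fin n → Fin n → H →L[ℂ] H := fun i j => e i ∘L x i j ∘L f j with hy
  set M : Matrix (Fin n) (Fin n) ℝ := Matrix.of fun i j => (‖y i j‖ : ℝ) with hM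
  set C : ℝ := ‖Matrix.toEuclideanCLM (𝕜 := ℝ) (n := Fin n) M‖ with hC
  refine ContinuousLinearMap.opNorm_le_bound _ (norm_nonneg _) fun ξ => ?_
  set η : H := (∑ i, ∑ j, y i j) ξ with hη
  have hterm : ∀ i j, RCLike.re (inner ℂ (y i j ξ) η : ℂ) ≤ ‖y i j‖ * ‖f j ξ‖ * ‖e i η‖ := by
    intro i j
    have h1 : y i j ξ = e i (y i j ξ) := by
      have h := congrArg (fun T : H →L[ℂ] H => T (x i j (f j ξ))) (he_idem i)
      simpa [hy, ContinuousLinearMap.mul_apply, ContinuousLinearMap.comp_apply] using h.symm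
    have hfj : f j (f j ξ) = f j ξ := by
      simpa [ContinuousLinearMap.mul_apply] using
        congrArg (fun T : H →L[ℂ] H => T ξ) (hf_idem j)
    have h2 : y i j ξ = y i j (f j ξ) := by
      simp [hy, ContinuousLinearMap.comp_apply, hfj]
    have hsa' := ContinuousLinearMap.isSelfAdjoint_iff'.mp (he_sa i)
    have hmove : (inner ℂ (y i j ξ) η : ℂ) = inner ℂ (y i j ξ) (e i η) := by
      conv_lhs => rw [h1]
      rw [← ContinuousLinearMap.adjoint_inner_right, hsa']
    calc RCLike.re (inner ℂ (y i j ξ) η : ℂ)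
        = RCLike.re (inner ℂ (y i j ξ) (e i η) : ℂ) := by rw [hmove]
      _ ≤ ‖(inner ℂ (y i j ξ) (e i η) : ℂ)‖ := RCLike.re_le_norm _
      _ ≤ ‖y i j ξ‖ * ‖e i η‖ := norm_inner_le_norm _ _
      _ = ‖y i j (f j ξ)‖ * ‖e i η‖ := by rw [← h2]
      _ ≤ (‖y i j‖ * ‖f j ξ‖) * ‖e i η‖ := by
          gcongr; exact ContinuousLinearMap.le_opNorm _ _
      _ = ‖y i j‖ * ‖f j ξ‖ * ‖e i η‖ := by ring
  set a : EuclideanSpace ℝ (Fin n) := (WithLp.equiv 2 (Fin n → ℝ)).symm fun i => ‖e i η‖ with ha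
  set b : EuclideanSpace ℝ (Fin n) := (WithLp.equiv 2 (Fin n → ℝ)).symm fun j => ‖f j ξ‖ with hb
  have ha' : ∀ i, a i = ‖e i η‖ := fun i => rfl
  have hb' : ∀ j, b j = ‖f j ξ‖ := fun j => rfl
  have hstep1 : ‖η‖ ^ 2 ≤ ∑ i, ∑ j, ‖y i j‖ * ‖f j ξ‖ * ‖e i η‖ := by
    have h0 : ‖η‖ ^ 2 = RCLike.re (inner ℂ η η : ℂ) := (inner_self_eq_norm_sq _).symm
    have hexp : (inner ℂ η η : ℂ) = ∑ i, ∑ j, inner ℂ (y i j ξ) η := by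
      have hdef : (inner ℂ η η : ℂ) = inner ℂ ((∑ i, ∑ j, y i j) ξ) η := rfl
      rw [hdef, ContinuousLinearMap.sum_apply, sum_inner]
      refine Finset.sum_congr rfl fun i _ => ?_
      rw [ContinuousLinearMap.sum_apply, sum_inner]
    rw [h0, hexp, map_sum]
    refine Finset.sum_le_sum fun i _ => ?_
    rw [map_sum]
    exact Finset.sum_le_sum fun j _ => hterm i j
  set w : EuclideanSpace ℝ (Fin n) := (Matrix.toEuclideanCLM (𝕜 := ℝ) (n := Fin n) M) b with hw
  have hMb : ∀ i, w i = ∑ j, M i j * b j := fun i => rfl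
  have hstep2 : (∑ i, ∑ j, ‖y i j‖ * ‖f j ξ‖ * ‖e i η‖) = inner ℝ a w := by
    calc (∑ i, ∑ j, ‖y i j‖ * ‖f j ξ‖ * ‖e i η‖)
        = ∑ i, a i * (∑ j, M i j * b j) := by
          refine Finset.sum_congr rfl fun i _ => ?_
          rw [Finset.mul_sum]
          refine Finset.sum_congr rfl fun j _ => ?_
          simp only [ha', hb', hM, Matrix.of_apply]
          ring
      _ = inner ℝ a w := by
          rw [PiLp.inner_apply]
          refine (Finset.sum_congr rfl fun i _ => ?_).symm
          rw [hMb i]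
          simp [RCLike.inner_apply, mul_comm]
  have hna : ‖a‖ ≤ ‖η‖ := by
    have hsq := aux_sum_sq_proj_le e he_idem he_sa he_orth η
    have h1 : ∑ i, ‖a i‖ ^ 2 ≤ ‖η‖ ^ 2 := by
      refine le_trans (le_of_eq ?_) hsq
      exact Finset.sum_congr rfl fun i _ => by rw [ha', Real.norm_eq_abs, sq_abs]
    rw [EuclideanSpace.norm_eq]
    calc Real.sqrt (∑ i, ‖a i‖ ^ 2) ≤ Real.sqrt (‖η‖ ^ 2) := Real.sqrt_le_sqrt h1
      _ = ‖η‖ := Real.sqrt_sq (norm_nonneg _)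
  have hnb : ‖b‖ ≤ ‖ξ‖ := by
    have hsq := aux_sum_sq_proj_le f hf_idem hf_sa hf_orth ξ
    have h1 : ∑ j, ‖b j‖ ^ 2 ≤ ‖ξ‖ ^ 2 := by
      refine le_trans (le_of_eq ?_) hsq
      exact Finset.sum_congr rfl fun j _ => by rw [hb', Real.norm_eq_abs, sq_abs]
    rw [EuclideanSpace.norm_eq]
    calc Real.sqrt (∑ j, ‖b j‖ ^ 2) ≤ Real.sqrt (‖ξ‖ ^ 2) := Real.sqrt_le_sqrt h1
      _ = ‖ξ‖ := Real.sqrt_sq (norm_nonneg _)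
  have hfinal : ‖η‖ ^ 2 ≤ C * (‖η‖ * ‖ξ‖) := by
    have h3 : (inner ℝ a w : ℝ) ≤ ‖a‖ * ‖w‖ := real_inner_le_norm _ _
    have h4 : ‖w‖ ≤ C * ‖b‖ := ContinuousLinearMap.le_opNorm _ _
    have hC0 : (0:ℝ) ≤ C := norm_nonneg _
    calc ‖η‖ ^ 2 ≤ ∑ i, ∑ j, ‖y i j‖ * ‖f j ξ‖ * ‖e i η‖ := hstep1
      _ = inner ℝ a w := hstep2
      _ ≤ ‖a‖ * ‖w‖ := h3
      _ ≤ ‖a‖ * (C * ‖b‖) := by gcongr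
      _ ≤ ‖η‖ * (C * ‖ξ‖) := by gcongr
      _ = C * (‖η‖ * ‖ξ‖) := by ring
  show ‖η‖ ≤ C * ‖ξ‖
  rcases eq_or_lt_of_le (norm_nonneg η) with h | h
  · rw [← h]; exact mul_nonneg (norm_nonneg _) (norm_nonneg _)
  · nlinarith
end

section
/- Let β > −1 and γ ∈ ℝ, and set α = β + iγ. Then for every n ∈ ℕ, |A_n^α| ≤ exp( (γ²/2) · Σ_{k=1}^{n} (β+k)^{-2} ) · A_n^β, where A_n^α = ∏_{j=1}^{n} (α+j)/j. -/
/-- The Cesàro coefficient `A_n^α = ∏_{j=1}^n (α + j)/j` for complex order `α`. -/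
noncomputable def cesaroCoeff (α : ℂ) (n : ℕ) : ℂ :=
  ∏ j ∈ Finset.range n, (α + (j + 1)) / (j + 1)

/-- The Cesàro coefficient for real order `β`. -/
noncomputable def cesaroCoeffReal (β : ℝ) (n : ℕ) : ℝ :=
  ∏ j ∈ Finset.range n, (β + (j + 1)) / (j + 1)

lemma aux_sqrt (a t : ℝ) (ha : 0 < a) :
    Real.sqrt (a ^ 2 + t ^ 2) ≤ Real.exp (t ^ 2 / 2 * (a ^ 2)⁻¹) * a := by
  have h2 : a ^ 2 + t ^ 2 ≤ (Real.exp (t ^ 2 / 2 * (a ^ 2)⁻¹) * a) ^ 2 := by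
    have : (Real.exp (t ^ 2 / 2 * (a ^ 2)⁻¹) * a) ^ 2
        = Real.exp (t ^ 2 * (a ^ 2)⁻¹) * a ^ 2 := by
      rw [mul_pow, ← Real.exp_nat_mul]; ring_nf
    rw [this]
    have h3 : 1 + t ^ 2 * (a ^ 2)⁻¹ ≤ Real.exp (t ^ 2 * (a ^ 2)⁻¹) :=
      by linarith [Real.add_one_le_exp (t ^ 2 * (a ^ 2)⁻¹)]
    have ha2 : (0:ℝ) < a ^ 2 := by positivity
    calc a ^ 2 + t ^ 2 = (1 + t ^ 2 * (a ^ 2)⁻¹) * a ^ 2 := by field_simp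
      _ ≤ Real.exp (t ^ 2 * (a ^ 2)⁻¹) * a ^ 2 := by nlinarith
  calc Real.sqrt (a ^ 2 + t ^ 2) ≤ Real.sqrt ((Real.exp (t ^ 2 / 2 * (a ^ 2)⁻¹) * a) ^ 2) :=
        Real.sqrt_le_sqrt h2
    _ = Real.exp (t ^ 2 / 2 * (a ^ 2)⁻¹) * a := Real.sqrt_sq (by positivity)

theorem abs_cesaroCoeff_le (β γ : ℝ) (hβ : -1 < β) (n : ℕ) :
    ‖cesaroCoeff (β + γ * Complex.I) n‖ ≤
      Real.exp (γ ^ 2 / 2 * ∑ k ∈ Finset.range n, ((β + (k + 1)) ^ 2)⁻¹) *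
        cesaroCoeffReal β n := by
  unfold cesaroCoeff cesaroCoeffReal
  rw [norm_prod, Finset.mul_sum, Real.exp_sum, ← Finset.prod_mul_distrib]
  apply Finset.prod_le_prod
  · intro j _; positivity
  · intro j _
    have hb : (0:ℝ) < β + (j + 1) := by
      have : (0:ℝ) ≤ j := Nat.cast_nonneg j
      linarith
    have hj : (0:ℝ) < (j:ℝ) + 1 := by positivity
    have h1 : (↑β + ↑γ * Complex.I + (↑j + 1)) = ((β + (j+1) : ℝ) : ℂ) + γ * Complex.I := by
      push_cast; ring
    rw [norm_div, h1, Complex.norm_add_mul_I]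
    have h2 : ‖((j:ℂ) + 1)‖ = (j:ℝ) + 1 := by
      rw [show ((j:ℂ) + 1) = (((j:ℝ) + 1 : ℝ) : ℂ) by push_cast; ring,
        Complex.norm_real, Real.norm_eq_abs, abs_of_pos hj]
    rw [h2, div_le_iff₀ hj]
    have := aux_sqrt (β + (j+1)) γ hb
    calc Real.sqrt ((β + (j+1)) ^ 2 + γ ^ 2)
        ≤ Real.exp (γ ^ 2 / 2 * ((β + (j+1)) ^ 2)⁻¹) * (β + (j+1)) := this
      _ = Real.exp (γ ^ 2 / 2 * ((β + (j+1)) ^ 2)⁻¹) * ((β + (j+1)) / ((j:ℝ)+1)) * ((j:ℝ)+1) := by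
          field_simp
end

section
/- Let A and B be unital C*-algebras and Φ : A → B a unital positive linear map. Then for every self-adjoint x ∈ A, Φ(x)² ≤ Φ(x²) (Kadison's Schwarz inequality). -/
open Finset in
lemma kadison_key {B : Type*} [CStarAlgebra B] [PartialOrder B] [StarOrderedRing B]
    {ι : Type*} (s : Finset ι) (b : ι → B) (hb : ∀ i ∈ s, 0 ≤ b i)
    (hsum : ∑ i ∈ s, b i = 1) (lam : ι → ℝ) :
    (∑ i ∈ s, lam i • b i) ^ 2 ≤ ∑ i ∈ s, (lam i)^2 • b i := by
  set c : B := ∑ i ∈ s, lam i • b i with hc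
  have hcsa : IsSelfAdjoint c := by
    rw [hc]
    unfold IsSelfAdjoint
    rw [star_sum]
    exact Finset.sum_congr rfl fun i hi => by
      rw [star_smul, star_trivial, (IsSelfAdjoint.of_nonneg (hb i hi)).star_eq]
  have key : ∑ i ∈ s, star (lam i • CFC.sqrt (b i) - CFC.sqrt (b i) * c) *
      (lam i • CFC.sqrt (b i) - CFC.sqrt (b i) * c)
      = (∑ i ∈ s, (lam i)^2 • b i) - c^2 := by
    have hterm : ∀ i ∈ s, star (lam i • CFC.sqrt (b i) - CFC.sqrt (b i) * c) *
        (lam i • CFC.sqrt (b i) - CFC.sqrt (b i) * c)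
        = (lam i)^2 • b i - lam i • (b i * c) - lam i • (c * b i) + c * (b i * c) := by
      intro i hi
      have hs : IsSelfAdjoint (CFC.sqrt (b i)) :=
        IsSelfAdjoint.of_nonneg (CFC.sqrt_nonneg (b i))
      have hss : CFC.sqrt (b i) * CFC.sqrt (b i) = b i :=
        CFC.sqrt_mul_sqrt_self (b i) (hb i hi)
      generalize CFC.sqrt (b i) = T at hs hss
      rw [star_sub, star_smul, star_trivial, hs.star_eq, star_mul, hs.star_eq, hcsa.star_eq,
        ← hss]
      simp only [pow_two, mul_sub, sub_mul, smul_mul_assoc, mul_smul_comm, smul_smul, mul_assoc]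
      module
    rw [Finset.sum_congr rfl hterm]
    simp only [Finset.sum_add_distrib, Finset.sum_sub_distrib]
    have h1 : ∑ i ∈ s, lam i • (b i * c) = c * c := by
      rw [hc, Finset.sum_mul]
      exact Finset.sum_congr rfl fun i hi => (smul_mul_assoc _ _ _).symm
    have h2 : ∑ i ∈ s, lam i • (c * b i) = c * c := by
      nth_rewrite 2 [hc]
      rw [Finset.mul_sum]
      exact Finset.sum_congr rfl fun i hi => by rw [mul_smul_comm]
    have h3 : ∑ i ∈ s, c * (b i * c) = c * c := by
      rw [← Finset.mul_sum, ← Finset.sum_mul, hsum, one_mul]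
    rw [h1, h2, h3, pow_two]
    abel
  have hpos : 0 ≤ (∑ i ∈ s, (lam i)^2 • b i) - c^2 := by
    rw [← key]
    exact Finset.sum_nonneg fun i hi => star_mul_self_nonneg _
  exact sub_nonneg.mp hpos

noncomputable def hatF (v : ℝ) : ℝ := max 0 (1 - |v|)

lemma hatF_nonneg (v : ℝ) : 0 ≤ hatF v := le_max_left _ _

lemma hatF_continuous : Continuous hatF := by
  unfold hatF; fun_prop

lemma hat_sum_eq (u : ℝ) (N : ℕ) (hu : |u| < N) (q : ℤ → ℝ) :
    ∑ k ∈ Finset.Icc (-(N:ℤ)) N, q k * hatF (u - k) =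
      q ⌊u⌋ * (1 - Int.fract u) + q (⌊u⌋ + 1) * Int.fract u := by
  obtain ⟨hu1, hu2⟩ := abs_lt.mp hu
  have h0 : (0:ℝ) ≤ Int.fract u := Int.fract_nonneg u
  have h1 : Int.fract u < 1 := Int.fract_lt_one u
  have hfr : Int.fract u = u - ⌊u⌋ := rfl
  have hfl : (⌊u⌋ : ℝ) ≤ u := Int.floor_le u
  have hfl2 : u < (⌊u⌋ : ℝ) + 1 := Int.lt_floor_add_one u
  have hk1 : -(N:ℤ) ≤ ⌊u⌋ := Int.le_floor.mpr (by push_cast; linarith)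
  have hk2 : ⌊u⌋ + 1 ≤ (N:ℤ) := by
    have : ⌊u⌋ < (N:ℤ) := Int.floor_lt.mpr (by push_cast; linarith)
    omega
  have hne : ⌊u⌋ ≠ ⌊u⌋ + 1 := by omega
  have hsub : ({⌊u⌋, ⌊u⌋ + 1} : Finset ℤ) ⊆ Finset.Icc (-(N:ℤ)) N := by
    intro k hk
    simp only [Finset.mem_insert, Finset.mem_singleton] at hk
    rcases hk with rfl | rfl <;> simp only [Finset.mem_Icc] <;> omega
  have hvanish : ∀ k ∈ Finset.Icc (-(N:ℤ)) N, k ∉ ({⌊u⌋, ⌊u⌋ + 1} : Finset ℤ) →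
      q k * hatF (u - k) = 0 := by
    intro k _ hk
    simp only [Finset.mem_insert, Finset.mem_singleton, not_or] at hk
    obtain ⟨hka, hkb⟩ := hk
    have habs : 1 ≤ |u - k| := by
      rcases lt_or_gt_of_ne hka with hlt | hgt
      · have : (k:ℝ) ≤ (⌊u⌋:ℝ) - 1 := by exact_mod_cast Int.le_sub_one_of_lt hlt
        exact le_abs.mpr (Or.inl (by linarith))
      · have hk2' : (⌊u⌋:ℝ) + 2 ≤ (k:ℝ) := by
          have : ⌊u⌋ + 2 ≤ k := by omega
          exact_mod_cast this
        exact le_abs.mpr (Or.inr (by linarith))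
    have : hatF (u - k) = 0 := max_eq_left (by linarith)
    rw [this, mul_zero]
  rw [← Finset.sum_subset hsub hvanish, Finset.sum_pair hne]
  have e1 : hatF (u - ⌊u⌋) = 1 - Int.fract u := by
    unfold hatF
    rw [← hfr, abs_of_nonneg h0]
    exact max_eq_right (by linarith)
  have e2 : hatF (u - ((⌊u⌋ + 1 : ℤ) : ℝ)) = Int.fract u := by
    have h : u - ((⌊u⌋ + 1 : ℤ) : ℝ) = Int.fract u - 1 := by push_cast; rw [hfr]; ring
    unfold hatF
    rw [h, abs_of_nonpos (sub_nonpos.mpr h1.le)]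
    have h' : (1 : ℝ) - -(Int.fract u - 1) = Int.fract u := by ring
    rw [h']
    exact max_eq_right h0
  rw [e1, e2]


set_option maxHeartbeats 1000000 in
theorem kadison_schwarz
    {A B : Type*}
    [NormedRing A] [StarRing A] [CStarRing A] [CompleteSpace A]
    [NormedAlgebra ℂ A] [StarModule ℂ A] [PartialOrder A] [StarOrderedRing A]
    [NormedRing B] [StarRing B] [CStarRing B] [CompleteSpace B]
    [NormedAlgebra ℂ B] [StarModule ℂ B] [PartialOrder B] [StarOrderedRing B]
    (Φ : A →ₗ[ℂ] B) (hpos : ∀ a : A, 0 ≤ a → 0 ≤ Φ a) (hunital : Φ 1 = 1)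
    (x : A) (hx : IsSelfAdjoint x) :
    (Φ x) ^ 2 ≤ Φ (x ^ 2) := by
  by_cases hA : Subsingleton A
  · have h10 : (0 : B) = 1 := by
      rw [← hunital, Subsingleton.elim (1 : A) 0, map_zero]
    have : Subsingleton B := subsingleton_of_zero_eq_one h10
    exact le_of_eq (Subsingleton.elim _ _)
  haveI : Nontrivial A := not_subsingleton_iff_nontrivial.mp hA
  letI : CStarAlgebra A :=
    { ‹NormedRing A›, ‹StarRing A›, ‹CStarRing A›, ‹NormedAlgebra ℂ A›, ‹StarModule ℂ A›,
      ‹CompleteSpace A› with }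
  letI : CStarAlgebra B :=
    { ‹NormedRing B›, ‹StarRing B›, ‹CStarRing B›, ‹NormedAlgebra ℂ B›, ‹StarModule ℂ B›,
      ‹CompleteSpace B› with }
  have hmono : ∀ a b : A, a ≤ b → Φ a ≤ Φ b := by
    intro a b hab
    have h := hpos (b - a) (sub_nonneg.mpr hab)
    rw [map_sub] at h
    exact sub_nonneg.mp h
  have main : ∀ δ : ℝ, 0 < δ → (Φ x) ^ 2 ≤ Φ (x ^ 2) + (δ ^ 2) • (1 : B) := by
    intro δ hδ
    set N : ℕ := ⌊‖x‖ / δ⌋₊ + 1 with hNdef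
    have hN : ‖x‖ / δ < N := by
      rw [hNdef]; push_cast; exact Nat.lt_floor_add_one _
    have hspec : ∀ t ∈ spectrum ℝ x, |t / δ| < N := by
      intro t ht
      have h1 : |t| ≤ ‖x‖ := by
        simpa [Real.norm_eq_abs] using spectrum.norm_le_norm_of_mem ht
      rw [abs_div, abs_of_pos hδ]
      calc |t| / δ ≤ ‖x‖ / δ := by gcongr
        _ < N := hN
    set I : Finset ℤ := Finset.Icc (-(N:ℤ)) (N:ℤ) with hI
    set g : ℤ → ℝ → ℝ := fun k t => hatF (t / δ - k) with hg
    have hgc : ∀ k, Continuous (g k) := fun k => hatF_continuous.comp (by fun_prop)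
    set b : ℤ → B := fun k => Φ (cfc (g k) x) with hbdef
    set lam : ℤ → ℝ := fun k => (k : ℝ) * δ with hlam
    have hb0 : ∀ k ∈ I, 0 ≤ b k := fun k _ =>
      hpos _ (cfc_nonneg fun t _ => hatF_nonneg _)
    -- sum of b equals 1
    have hbsum : ∑ k ∈ I, b k = 1 := by
      rw [← map_sum, ← cfc_sum g x I (fun k _ => (hgc k).continuousOn)]
      have : cfc (∑ k ∈ I, g k) x = cfc (1 : ℝ → ℝ) x := by
        apply cfc_congr
        intro t ht
        rw [Finset.sum_apply]
        have := hat_sum_eq (t / δ) N (hspec t ht) (fun _ => 1)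
        simpa using this
      rw [this, cfc_one ℝ x, hunital]
    -- weighted sum equals Φ x
    have hbx : ∑ k ∈ I, lam k • b k = Φ x := by
      have e1 : ∀ k ∈ I, lam k • b k = Φ (lam k • cfc (g k) x) := fun k _ =>
        (LinearMap.map_smul_of_tower Φ (lam k) _).symm
      rw [Finset.sum_congr rfl e1, ← map_sum]
      congr 1
      calc ∑ k ∈ I, lam k • cfc (g k) x
          = ∑ k ∈ I, cfc (fun t => lam k * g k t) x :=
            Finset.sum_congr rfl fun k _ =>
              (cfc_const_mul (lam k) (g k) x ((hgc k).continuousOn)).symm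
        _ = cfc (∑ k ∈ I, fun t => lam k * g k t) x :=
            (cfc_sum _ x I (fun k _ => (continuous_const.mul (hgc k)).continuousOn)).symm
        _ = cfc (fun t : ℝ => ∑ k ∈ I, lam k * g k t) x := by
            congr 1
            funext t
            simp
        _ = cfc (id : ℝ → ℝ) x := by
            apply cfc_congr
            intro t ht
            have hse := hat_sum_eq (t / δ) N (hspec t ht) (fun k => (k : ℝ) * δ)
            simp only [hlam, hg]
            rw [hse]
            have hfr : Int.fract (t / δ) = t / δ - ⌊t / δ⌋ := rfl
            push_cast
            rw [hfr]
            have hδ' : δ ≠ 0 := ne_of_gt hδ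
            field_simp
            simp only [id_eq]
            ring
        _ = x := cfc_id ℝ x
    -- squared weighted sum bounded by Φ (x^2) + δ^2
    have hbsq : ∑ k ∈ I, (lam k) ^ 2 • b k ≤ Φ (x ^ 2) + δ ^ 2 • (1 : B) := by
      have e1 : ∀ k ∈ I, (lam k) ^ 2 • b k = Φ ((lam k) ^ 2 • cfc (g k) x) := fun k _ =>
        (LinearMap.map_smul_of_tower Φ _ _).symm
      rw [Finset.sum_congr rfl e1, ← map_sum]
      have e3 : ∑ k ∈ I, (lam k) ^ 2 • cfc (g k) x
          = cfc (∑ k ∈ I, fun t => (lam k) ^ 2 * g k t) x := by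
        rw [cfc_sum (fun k => fun t => (lam k) ^ 2 * g k t) x I (fun k _ => (continuous_const.mul (hgc k)).continuousOn)]
        exact Finset.sum_congr rfl fun k _ =>
          (cfc_const_mul ((lam k) ^ 2) (g k) x ((hgc k).continuousOn)).symm
      rw [e3]
      have e4 : cfc (∑ k ∈ I, fun t => (lam k) ^ 2 * g k t) x
          = cfc (fun t : ℝ => ∑ k ∈ I, (lam k) ^ 2 * g k t) x := by
        congr 1
        funext t
        simp
      rw [e4]
      have hle : cfc (fun t : ℝ => ∑ k ∈ I, (lam k) ^ 2 * g k t) x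
          ≤ cfc (fun t : ℝ => t ^ 2 + δ ^ 2) x := by
        refine cfc_mono (fun t ht => ?_)
          (Continuous.continuousOn (continuous_finset_sum I fun k _ =>
            continuous_const.mul (hgc k)))
          (Continuous.continuousOn (by fun_prop))
        simp only [hlam, hg]
        have hsum := hat_sum_eq (t / δ) N (hspec t ht) (fun k => ((k : ℝ) * δ) ^ 2)
        rw [hsum]
        have hfr : Int.fract (t / δ) = t / δ - ⌊t / δ⌋ := rfl
        have h0 : (0:ℝ) ≤ Int.fract (t / δ) := Int.fract_nonneg _
        have h1 : Int.fract (t / δ) < 1 := Int.fract_lt_one _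
        set f : ℝ := Int.fract (t / δ) with hfd
        set m : ℝ := ((⌊t / δ⌋ : ℤ) : ℝ) with hm
        have hfr' : f = t / δ - m := hfr
        have htu : t = δ * (m + f) := by
          rw [hfr']
          field_simp
          ring
        have hc : ((⌊t / δ⌋ + 1 : ℤ) : ℝ) = m + 1 := by rw [hm]; push_cast; ring
        rw [hc, htu]
        have hf1 : f * (1 - f) ≤ 1 := by nlinarith
        nlinarith [mul_le_mul_of_nonneg_left hf1 (sq_nonneg δ), sq_nonneg δ]
      have heq : cfc (fun t : ℝ => t ^ 2 + δ ^ 2) x = x ^ 2 + δ ^ 2 • (1 : A) := by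
        rw [cfc_add x (fun t => t ^ 2) (fun _ => δ ^ 2) (by fun_prop) (by fun_prop)]
        rw [cfc_pow_id x 2, cfc_const (δ ^ 2) x, Algebra.algebraMap_eq_smul_one]
      calc Φ (cfc (fun t : ℝ => ∑ k ∈ I, (lam k) ^ 2 * g k t) x)
            ≤ Φ (cfc (fun t : ℝ => t ^ 2 + δ ^ 2) x) := hmono _ _ hle
        _ = Φ (x ^ 2) + δ ^ 2 • (1 : B) := by
            rw [heq, map_add, LinearMap.map_smul_of_tower, hunital]
    calc (Φ x) ^ 2 = (∑ k ∈ I, lam k • b k) ^ 2 := by rw [hbx]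
      _ ≤ ∑ k ∈ I, (lam k) ^ 2 • b k := kadison_key I b hb0 hbsum lam
      _ ≤ Φ (x ^ 2) + δ ^ 2 • (1 : B) := hbsq
  -- pass to the limit
  have lim : Filter.Tendsto (fun n : ℕ => Φ (x ^ 2) + ((1 : ℝ) / (n + 1)) ^ 2 • (1 : B))
      Filter.atTop (nhds (Φ (x ^ 2))) := by
    have h1 : Filter.Tendsto (fun n : ℕ => ((1 : ℝ) / (n + 1)) ^ 2) Filter.atTop (nhds 0) := by
      have := tendsto_one_div_add_atTop_nhds_zero_nat (𝕜 := ℝ)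
      simpa using this.pow 2
    have h2 := h1.smul_const (1 : B)
    rw [zero_smul] at h2
    simpa using (tendsto_const_nhds (x := Φ (x ^ 2)) (f := Filter.atTop (α := ℕ))).add h2
  exact ge_of_tendsto' lim fun n => main _ (by positivity)
end

section
/- Let T be a bounded operator on a complex Hilbert space H which is self-adjoint with 0 ≤ T ≤ 1, and let m ≥ 1. Then for every x ∈ H, Σ_{k=m}^{∞} k · (B_{k−1}^{m−1})² · ‖(T−1)^m T^{k−m} x‖² ≤ C_m ‖x‖², where B_k^j = k(k−1)⋯(k−j+1) is the falling factorial and C_m is a constant depending only on m. -/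
open Finset ContinuousLinearMap

private lemma lp_aux_identity (t : ℝ) (n : ℕ) (N : ℕ) :
    (1 - t) * ∑ j ∈ range N, ((n + 1 + j).choose j : ℝ) * t ^ j
      + ((n + 1 + N).choose N : ℝ) * t ^ N
    = ∑ j ∈ range N, ((n + j).choose j : ℝ) * t ^ j + ((n + N).choose N : ℝ) * t ^ N := by
  induction N with
  | zero => simp
  | succ N ih =>
    rw [sum_range_succ, sum_range_succ]
    have p1 : ((n + 1 + (N+1)).choose (N+1) : ℝ)
        = ((n + 1 + N).choose N : ℝ) + ((n + 1 + N).choose (N+1) : ℝ) := by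
      rw [show n + 1 + (N+1) = (n + 1 + N) + 1 by ring, Nat.choose_succ_succ']
      push_cast; ring
    have p2 : ((n + (N+1)).choose (N+1) : ℝ)
        = ((n + N).choose N : ℝ) + ((n + N).choose (N+1) : ℝ) := by
      rw [show n + (N+1) = (n + N) + 1 by ring, Nat.choose_succ_succ']
      push_cast; ring
    have p3 : ((n + 1 + N).choose (N+1) : ℝ)
        = ((n+N).choose N : ℝ) + ((n+N).choose (N+1) : ℝ) := by
      rw [show n + 1 + N = (n + N) + 1 by ring, Nat.choose_succ_succ']
      push_cast; ring
    rw [p1, p2, p3]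
    rw [pow_succ]
    linear_combination ih

private lemma lp_key (t : ℝ) (h0 : 0 ≤ t) (h1 : t ≤ 1) (n : ℕ) :
    ∀ N, (1 - t) ^ (n + 1) * ∑ j ∈ range N, ((n + j).choose j : ℝ) * t ^ j ≤ 1 := by
  induction n with
  | zero =>
    intro N
    have hs : ∑ j ∈ range N, ((0 + j).choose j : ℝ) * t ^ j = ∑ j ∈ range N, t ^ j := by
      simp
    rw [zero_add, pow_one, hs]
    have hgs := geom_sum_mul t N
    nlinarith [pow_nonneg h0 N]
  | succ n ih =>
    intro N
    have hmono : ((n + N).choose N : ℝ) ≤ ((n + 1 + N).choose N : ℝ) := by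
      exact_mod_cast Nat.choose_le_choose N (by omega)
    have hstep : (1 - t) * ∑ j ∈ range N, ((n + 1 + j).choose j : ℝ) * t ^ j
        ≤ ∑ j ∈ range N, ((n + j).choose j : ℝ) * t ^ j := by
      have hid := lp_aux_identity t n N
      nlinarith [pow_nonneg h0 N]
    have hnn : (0:ℝ) ≤ (1 - t) ^ (n + 1) := pow_nonneg (by linarith) _
    calc (1 - t) ^ (n + 1 + 1) * ∑ j ∈ range N, ((n + 1 + j).choose j : ℝ) * t ^ j
        = (1 - t) ^ (n + 1) * ((1 - t) * ∑ j ∈ range N, ((n + 1 + j).choose j : ℝ) * t ^ j) := by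
          ring
      _ ≤ (1 - t) ^ (n + 1) * ∑ j ∈ range N, ((n + j).choose j : ℝ) * t ^ j :=
          mul_le_mul_of_nonneg_left hstep hnn
      _ ≤ 1 := ih N

private lemma lp_dF_mono (a : ℕ) : ∀ {n n' : ℕ}, n ≤ n' → n.descFactorial a ≤ n'.descFactorial a := by
  induction a with
  | zero => simp
  | succ a ih =>
    intro n n' h
    rw [Nat.descFactorial_succ, Nat.descFactorial_succ]
    exact Nat.mul_le_mul (Nat.sub_le_sub_right h a) (ih h)

private lemma lp_dF_add (n a b : ℕ) :
    n.descFactorial (a + b) = n.descFactorial a * (n - a).descFactorial b := by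
  induction b with
  | zero => simp
  | succ b ih =>
    rw [show a + (b+1) = (a+b)+1 from rfl, Nat.descFactorial_succ, ih,
      Nat.descFactorial_succ, Nat.sub_sub]
    ring

private lemma lp_coeff (m' j : ℕ) :
    (m' + 1 + j) * ((m' + j).descFactorial m') ^ 2
      ≤ (2 * m' + 1 + j).descFactorial (2 * m' + 1) := by
  have h1 : (2 * m' + 1 + j).descFactorial (2 * m' + 1)
      = (2 * m' + 1 + j).descFactorial m' * ((m' + 1 + j).descFactorial (m' + 1)) := by
    rw [show 2 * m' + 1 = m' + (m' + 1) by ring, lp_dF_add]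
    congr 2
    omega
  have h2 : (m' + 1 + j).descFactorial (m' + 1) = (m' + 1 + j) * (m' + j).descFactorial m' := by
    rw [show m' + 1 + j = (m' + j) + 1 by ring, Nat.succ_descFactorial_succ]
  rw [h1, h2, pow_two]
  have := lp_dF_mono m' (show m' + j ≤ 2 * m' + 1 + j by omega)
  nlinarith [this]

private lemma lp_scalar (m' : ℕ) (lam : ℝ) (h0 : 0 ≤ lam) (h1 : lam ≤ 1) (N : ℕ) :
    ∑ j ∈ range N, ((m' + 1 + j : ℕ) : ℝ) * ((m' + j).descFactorial m' : ℝ) ^ 2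
        * ((lam - 1) ^ (m' + 1) * lam ^ j) ^ 2
      ≤ ((2 * m' + 1).factorial : ℝ) := by
  set t : ℝ := lam ^ 2 with ht
  have ht0 : 0 ≤ t := sq_nonneg lam
  have ht1 : t ≤ 1 := by nlinarith
  have hlt : 1 - lam ≤ 1 - t := by nlinarith
  have hl0 : 0 ≤ 1 - lam := by linarith
  have main : ∑ j ∈ range N,
      ((m' + 1 + j : ℕ) : ℝ) * ((m' + j).descFactorial m' : ℝ) ^ 2
        * ((lam - 1) ^ (m' + 1) * lam ^ j) ^ 2
      ≤ ((2 * m' + 1).factorial : ℝ) *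
        ((1 - t) ^ (2 * m' + 1 + 1) * ∑ j ∈ range N, (((2 * m' + 1) + j).choose j : ℝ) * t ^ j) := by
    rw [Finset.mul_sum, Finset.mul_sum]
    apply sum_le_sum
    intro j _
    have e1 : ((lam - 1) ^ (m' + 1) * lam ^ j) ^ 2
        = ((1 - lam) ^ 2) ^ (m' + 1) * t ^ j := by
      rw [ht, mul_pow, ← pow_mul, ← pow_mul, mul_comm (m' + 1) 2, mul_comm j 2,
        pow_mul, pow_mul, show (lam - 1) ^ 2 = (1 - lam) ^ 2 by ring]
    have e2 : ((1 - lam) ^ 2) ^ (m' + 1) ≤ ((1 - t) ^ 2) ^ (m' + 1) := by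
      apply pow_le_pow_left₀ (sq_nonneg _)
      nlinarith
    have hc : ((m' + 1 + j : ℕ) : ℝ) * ((m' + j).descFactorial m' : ℝ) ^ 2
        ≤ ((2 * m' + 1).factorial : ℝ) * (((2 * m' + 1) + j).choose j : ℝ) := by
      have h := lp_coeff m' j
      have heq : (2 * m' + 1 + j).descFactorial (2 * m' + 1)
          = (2 * m' + 1).factorial * ((2 * m' + 1) + j).choose j := by
        rw [Nat.descFactorial_eq_factorial_mul_choose]
        congr 1
        rw [← Nat.choose_symm (by omega : j ≤ 2 * m' + 1 + j)]
        congr 1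
        omega
      calc ((m' + 1 + j : ℕ) : ℝ) * ((m' + j).descFactorial m' : ℝ) ^ 2
          = (((m' + 1 + j) * ((m' + j).descFactorial m') ^ 2 : ℕ) : ℝ) := by push_cast; ring
        _ ≤ (((2 * m' + 1 + j).descFactorial (2 * m' + 1) : ℕ) : ℝ) := by exact_mod_cast h
        _ = _ := by rw [heq]; push_cast; ring
    rw [e1]
    calc ((m' + 1 + j : ℕ) : ℝ) * ((m' + j).descFactorial m' : ℝ) ^ 2
          * (((1 - lam) ^ 2) ^ (m' + 1) * t ^ j)
        ≤ ((2 * m' + 1).factorial : ℝ) * (((2 * m' + 1) + j).choose j : ℝ)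
          * (((1 - t) ^ 2) ^ (m' + 1) * t ^ j) := by
          apply mul_le_mul hc
          · exact mul_le_mul_of_nonneg_right e2 (pow_nonneg ht0 j)
          · positivity
          · positivity
      _ = ((2 * m' + 1).factorial : ℝ) *
            ((1 - t) ^ (2 * m' + 1 + 1) * ((((2 * m' + 1) + j).choose j : ℝ) * t ^ j)) := by
          rw [← pow_mul, show 2 * (m' + 1) = 2 * m' + 1 + 1 by ring]
          ring
  calc _ ≤ _ := main
    _ ≤ ((2 * m' + 1).factorial : ℝ) * 1 := by
        apply mul_le_mul_of_nonneg_left (lp_key t ht0 ht1 (2 * m' + 1) N) (by positivity)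
    _ = _ := mul_one _

theorem littlewood_paley_hilbert
    {H : Type*} [NormedAddCommGroup H] [InnerProductSpace ℂ H] [CompleteSpace H]
    (T : H →L[ℂ] H) (hsa : IsSelfAdjoint T)
    (hpos : ∀ x : H, 0 ≤ (inner ℂ (T x) x : ℂ).re) (hT : ‖T‖ ≤ 1)
    (m : ℕ) (hm : 1 ≤ m) :
    ∃ C : ℝ, 0 < C ∧ ∀ x : H,
      Summable (fun j : ℕ =>
        ((m + j : ℕ) : ℝ) * (Nat.descFactorial (m + j - 1) (m - 1) : ℝ) ^ 2 *
          ‖((T - 1) ^ m * T ^ j) x‖ ^ 2) ∧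
      (∑' j : ℕ,
        ((m + j : ℕ) : ℝ) * (Nat.descFactorial (m + j - 1) (m - 1) : ℝ) ^ 2 *
          ‖((T - 1) ^ m * T ^ j) x‖ ^ 2) ≤ C * ‖x‖ ^ 2 := by
  obtain ⟨m', rfl⟩ : ∃ m', m = m' + 1 := ⟨m - 1, by omega⟩
  -- the spectrum of `T` lies in `[0, 1]`
  have hspec : spectrum ℝ T ⊆ Set.Icc 0 1 := by
    intro μ hμ
    constructor
    · have hTpos : (0:H →L[ℂ] H) ≤ T := (nonneg_iff_isPositive T).mpr ⟨hsa.isSymmetric, fun x => hpos x⟩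
      exact spectrum_nonneg_of_nonneg hTpos hμ
    · have hn := spectrum.norm_le_norm_mul_of_mem hμ
      have h1 : ‖(1 : H →L[ℂ] H)‖ ≤ 1 := norm_id_le
      calc μ ≤ ‖μ‖ := le_abs_self μ
        _ ≤ ‖T‖ * ‖(1 : H →L[ℂ] H)‖ := hn
        _ ≤ 1 := by nlinarith [norm_nonneg T, norm_nonneg (1 : H →L[ℂ] H)]
  set C : ℝ := ((2 * m' + 1).factorial : ℝ) with hC
  have hCpos : 0 < C := by positivity
  refine ⟨C, hCpos, fun x => ?_⟩
  set c : ℕ → ℝ := fun j => ((m' + 1 + j : ℕ) : ℝ) * ((m' + j).descFactorial m' : ℝ) ^ 2 with hc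
  have hcnn : ∀ j, 0 ≤ c j := fun j => by positivity
  set F : ℕ → ℝ := fun j =>
      ((m' + 1 + j : ℕ) : ℝ) * (Nat.descFactorial (m' + 1 + j - 1) (m' + 1 - 1) : ℝ) ^ 2 *
        ‖((T - 1) ^ (m' + 1) * T ^ j) x‖ ^ 2 with hF
  have hFc : ∀ j, F j = c j * ‖((T - 1) ^ (m' + 1) * T ^ j) x‖ ^ 2 := by
    intro j
    simp only [hF, hc, show m' + 1 + j - 1 = m' + j from by omega, Nat.add_sub_cancel]
  have hFnn : ∀ j, 0 ≤ F j := by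
    intro j; rw [hFc j]; positivity
  -- the selfadjoint operators `P j`
  have hcfcP : ∀ j : ℕ, cfc (fun s : ℝ => (s - 1) ^ (m' + 1) * s ^ j) T
      = (T - 1) ^ (m' + 1) * T ^ j := by
    intro j
    rw [cfc_mul _ _ T (by fun_prop) (by fun_prop)]
    congr 1
    · rw [cfc_pow (fun s : ℝ => s - 1) (m' + 1) T (by fun_prop),
        cfc_sub _ _ T (by fun_prop) (by fun_prop), cfc_id' ℝ T, cfc_const_one ℝ T]
    · rw [cfc_pow_id T j]
  have hnormP : ∀ j : ℕ, ‖((T - 1) ^ (m' + 1) * T ^ j) x‖ ^ 2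
      = (inner ℂ ((((T - 1) ^ (m' + 1) * T ^ j) ^ 2 : H →L[ℂ] H) x) x : ℂ).re := by
    intro j
    have hPsa : IsSelfAdjoint ((T - 1) ^ (m' + 1) * T ^ j) := hcfcP j ▸ cfc_predicate _ T
    rw [show ((T - 1) ^ (m' + 1) * T ^ j) ^ 2
        = ContinuousLinearMap.adjoint ((T - 1) ^ (m' + 1) * T ^ j)
            * ((T - 1) ^ (m' + 1) * T ^ j) by rw [hPsa.adjoint_eq, sq]]
    simp only [ContinuousLinearMap.mul_apply, ContinuousLinearMap.adjoint_inner_left]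
    exact (inner_self_eq_norm_sq (𝕜 := ℂ) _).symm
  -- bound on partial sums
  have hpartial : ∀ N : ℕ, ∑ j ∈ range N, F j ≤ C * ‖x‖ ^ 2 := by
    intro N
    set p : ℝ → ℝ := fun s => ∑ j ∈ range N, c j * ((s - 1) ^ (m' + 1) * s ^ j) ^ 2 with hp
    have hQ : cfc p T = ∑ j ∈ range N, c j • ((T - 1) ^ (m' + 1) * T ^ j) ^ 2 := by
      have hpe : p = ∑ j ∈ range N, (fun s : ℝ => c j * ((s - 1) ^ (m' + 1) * s ^ j) ^ 2) := by
        funext s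
        simp [hp]
      rw [hpe, cfc_sum _ T _ (fun i _ => by fun_prop)]
      apply Finset.sum_congr rfl
      intro j _
      rw [cfc_const_mul _ _ T (by fun_prop), cfc_pow _ _ T (by fun_prop), hcfcP j]
    -- norm bound for `cfc p T`
    have hnorm : ‖cfc p T‖ ≤ C := by
      apply norm_cfc_le hCpos.le
      intro μ hμ
      obtain ⟨hμ0, hμ1⟩ := hspec hμ
      have hnn : 0 ≤ p μ := by
        apply Finset.sum_nonneg
        intro j _
        exact mul_nonneg (hcnn j) (sq_nonneg _)
      rw [Real.norm_eq_abs, abs_of_nonneg hnn]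
      have := lp_scalar m' μ hμ0 hμ1 N
      calc p μ = ∑ j ∈ range N, ((m' + 1 + j : ℕ) : ℝ) * ((m' + j).descFactorial m' : ℝ) ^ 2
          * ((μ - 1) ^ (m' + 1) * μ ^ j) ^ 2 := by
            apply Finset.sum_congr rfl
            intro j _
            rw [hc, mul_assoc]
        _ ≤ C := this
    -- expand the inner product
    have hexpand : (inner ℂ ((cfc p T) x) x : ℂ).re = ∑ j ∈ range N, F j := by
      rw [hQ]
      rw [ContinuousLinearMap.sum_apply]
      rw [sum_inner]
      rw [Complex.re_sum]
      apply Finset.sum_congr rfl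
      intro j _
      rw [ContinuousLinearMap.smul_apply, RCLike.real_smul_eq_coe_smul (K := ℂ),
        inner_smul_left, RCLike.conj_ofReal, hFc j, hnormP j]
      simp
    calc ∑ j ∈ range N, F j = (inner ℂ ((cfc p T) x) x : ℂ).re := hexpand.symm
      _ ≤ ‖(inner ℂ ((cfc p T) x) x : ℂ)‖ := Complex.re_le_norm _
      _ ≤ ‖(cfc p T) x‖ * ‖x‖ := norm_inner_le_norm _ _
      _ ≤ (‖cfc p T‖ * ‖x‖) * ‖x‖ :=
          mul_le_mul_of_nonneg_right ((cfc p T).le_opNorm x) (norm_nonneg x)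
      _ ≤ (C * ‖x‖) * ‖x‖ := by
          have := mul_le_mul_of_nonneg_right hnorm (norm_nonneg x)
          exact mul_le_mul_of_nonneg_right this (norm_nonneg x)
      _ = C * ‖x‖ ^ 2 := by ring
  have hsummable : Summable F := summable_of_sum_range_le hFnn hpartial
  exact ⟨hsummable, Summable.tsum_le_of_sum_range_le hsummable hpartial⟩
end
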